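/- arXiv:1202.1606 — 3 statements merged into one kernel-verified Lean document; each statement's English description precedes it below -/
import Mathlib

section
/- Suppose a_n(x) = b_n(x) + κ_n b_{n-1}(x) + λ_n b_{n-2}(x), where {a_n} and {b_n} are monic orthogonal-type polynomial sequences satisfying a_{n+1} = (x - α_n)a_n - α̂_{n-1}a_{n-1} and b_{n+1} = (x - β_n)b_n - β̂_{n-1}b_{n-1}. Then for each n the following four equations hold: κ_{n+1} + α_n = β_n + κ_n; λ_{n+1} + α_n κ_n + α̂_{n-1} = β̂_{n-1} + κ_n β_{n-1} + λ_n; α_n λ_n + α̂_{n-1} κ_{n-1} = κ_n β̂_{n-2} + λ_n β_{n-2}; and α̂_{n-1} λ_{n-1} = λ_n β̂_{n-3}. -/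
open Polynomial

private lemma indep4 (b : ℕ → Polynomial ℝ)
    (hdeg : ∀ m, (b m).natDegree = m) (hlc : ∀ m, (b m).coeff m = 1)
    (k : ℕ) (c0 c1 c2 c3 : ℝ)
    (h : C c0 * b k + C c1 * b (k+1) + C c2 * b (k+2) + C c3 * b (k+3) = 0) :
    c0 = 0 ∧ c1 = 0 ∧ c2 = 0 ∧ c3 = 0 := by
  have z : ∀ m j : ℕ, m < j → (b m).coeff j = 0 := by
    intro m j hj
    exact coeff_eq_zero_of_natDegree_lt (by rw [hdeg]; omega)
  have h3 : c3 = 0 := by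
    have := congrArg (fun p => Polynomial.coeff p (k+3)) h
    simpa [coeff_C_mul, z k (k+3) (by omega), z (k+1) (k+3) (by omega),
      z (k+2) (k+3) (by omega), hlc (k+3)] using this
  subst h3
  have h2 : c2 = 0 := by
    have := congrArg (fun p => Polynomial.coeff p (k+2)) h
    simpa [coeff_C_mul, z k (k+2) (by omega), z (k+1) (k+2) (by omega),
      hlc (k+2)] using this
  subst h2
  have h1 : c1 = 0 := by
    have := congrArg (fun p => Polynomial.coeff p (k+1)) h
    simpa [coeff_C_mul, z k (k+1) (by omega), hlc (k+1)] using this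
  subst h1
  have h0 : c0 = 0 := by
    have := congrArg (fun p => Polynomial.coeff p k) h
    simpa [coeff_C_mul, hlc k] using this
  exact ⟨h0, rfl, rfl, rfl⟩

/-- Comparing the two expansions of `x·a_n(x)` in the basis `{b_m}` for the connection
`a_n = b_n + κ_n b_{n-1} + λ_n b_{n-2}` yields the four equations (s1)-(s4). -/
theorem stmt_3 (α αh β βh κ lam : ℕ → ℝ) (a b : ℕ → Polynomial ℝ)
    (ha0 : a 0 = 1) (ha1 : a 1 = X - C (α 0))
    (harec : ∀ n, 1 ≤ n → a (n + 1) = (X - C (α n)) * a n - C (αh (n - 1)) * a (n - 1))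
    (hb0 : b 0 = 1) (hb1 : b 1 = X - C (β 0))
    (hbrec : ∀ n, 1 ≤ n → b (n + 1) = (X - C (β n)) * b n - C (βh (n - 1)) * b (n - 1))
    (hlam1 : lam 1 = 0)
    (hcon1 : a 1 = b 1 + C (κ 1) * b 0)
    (hcon : ∀ n, 2 ≤ n → a n = b n + C (κ n) * b (n - 1) + C (lam n) * b (n - 2)) :
    ∀ n, 3 ≤ n →
      (κ (n + 1) + α n = β n + κ n) ∧
      (lam (n + 1) + α n * κ n + αh (n - 1) = βh (n - 1) + κ n * β (n - 1) + lam n) ∧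
      (α n * lam n + αh (n - 1) * κ (n - 1) = κ n * βh (n - 2) + lam n * β (n - 2)) ∧
      (αh (n - 1) * lam (n - 1) = lam n * βh (n - 3)) := by
  -- b m is monic of degree m
  have hbm : ∀ m, (b m).Monic ∧ (b m).natDegree = m := by
    intro m
    induction m using Nat.strong_induction_on with
    | _ m ih =>
      match m with
      | 0 => refine ⟨?_, ?_⟩ <;> simp [hb0, monic_one]
      | 1 => exact ⟨by rw [hb1]; exact monic_X_sub_C _, by rw [hb1]; exact natDegree_X_sub_C _⟩
      | (n+2) =>
        obtain ⟨hm1, hd1⟩ := ih (n+1) (by omega)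
        obtain ⟨hm0, hd0⟩ := ih n (by omega)
        have hrec := hbrec (n+1) (by omega)
        have hprod : ((X - C (β (n+1))) * b (n+1)).Monic := (monic_X_sub_C _).mul hm1
        have hpd : ((X - C (β (n+1))) * b (n+1)).natDegree = n + 2 := by
          rw [(monic_X_sub_C _).natDegree_mul hm1, natDegree_X_sub_C, hd1]; omega
        have hlow : (C (βh (n+1-1)) * b (n+1-1)).natDegree < n + 2 := by
          refine lt_of_le_of_lt (natDegree_C_mul_le _ _) ?_
          simp only [Nat.add_sub_cancel, hd0]; omega
        have hlt : (C (βh (n+1-1)) * b (n+1-1)).degree < ((X - C (β (n+1))) * b (n+1)).degree :=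
          degree_lt_degree (by omega)
        refine ⟨?_, ?_⟩
        · rw [hrec]; exact hprod.sub_of_left hlt
        · rw [hrec, natDegree_sub_eq_left_of_natDegree_lt (by omega), hpd]
  have hdeg : ∀ m, (b m).natDegree = m := fun m => (hbm m).2
  have hlc : ∀ m, (b m).coeff m = 1 := by
    intro m
    have := (hbm m).1.coeff_natDegree
    rwa [hdeg m] at this
  intro n hn
  obtain ⟨k, rfl⟩ : ∃ k, n = k + 3 := ⟨n - 3, by omega⟩
  have H := harec (k+3) (by omega)
  have A4 := hcon (k+4) (by omega)
  have A3 := hcon (k+3) (by omega)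
  have A2 := hcon (k+2) (by omega)
  have B3 := hbrec (k+3) (by omega)
  have B2 := hbrec (k+2) (by omega)
  have B1 := hbrec (k+1) (by omega)
  simp only [show k+4-1 = k+3 from rfl, show k+4-2 = k+2 from rfl,
    show k+3-1 = k+2 from rfl, show k+3-2 = k+1 from rfl,
    show k+2-1 = k+1 from rfl, show k+2-2 = k from rfl,
    show k+1-1 = k from rfl, show k+3-3 = k from rfl] at H A4 A3 A2 B3 B2 B1 ⊢
  have key : C (lam (k+3) * βh k - αh (k+2) * lam (k+2)) * b k
      + C (κ (k+3) * βh (k+1) + lam (k+3) * β (k+1)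
          - α (k+3) * lam (k+3) - αh (k+2) * κ (k+2)) * b (k+1)
      + C (βh (k+2) + κ (k+3) * β (k+2) + lam (k+3)
          - α (k+3) * κ (k+3) - αh (k+2) - lam (k+4)) * b (k+2)
      + C (β (k+3) + κ (k+3) - α (k+3) - κ (k+4)) * b (k+3) = 0 := by
    simp only [map_add, map_sub, map_mul]
    linear_combination (-1 : Polynomial ℝ) * H + A4 - (X - C (α (k+3))) * A3
      + C (αh (k+2)) * A2 + B3 + C (κ (k+3)) * B2 + C (lam (k+3)) * B1
  obtain ⟨e0, e1, e2, e3⟩ := indep4 b hdeg hlc k _ _ _ _ key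
  refine ⟨by linarith, by linarith, by linarith, by linarith⟩
end

section
/- For λ > 0, define κ_n = n · (Σ_{j≥n+1} λ^j/j!)/(Σ_{j≥n} λ^j/j!). Then κ_1 = λ + 1 - λe^λ/(e^λ - 1) and κ_n = n + λ - (n-1)λ/κ_{n-1} for all n ≥ 2. -/
/-!
Write `T n = Σ_{j ≥ n} λ^j / j!`, so `T 0 = e^λ` and `T n = λ^n/n! + T (n+1)`. Eliminating
`λ^n/n! = λ·λ^(n-1)/(n-1)!/n` between two consecutive instances of this gives the three-term
recurrence `n T(n+1) = (n + λ) T n - λ T(n-1)`; dividing it by `T n` and noting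
`λ T(n-1)/T n = (n-1)λ/κ_{n-1}` is the recurrence for `κ_n = n T(n+1)/T n`.
-/

open Real Nat

noncomputable def expTail (x : ℝ) (n : ℕ) : ℝ :=
  ∑' j : ℕ, x ^ (j + n) / (j + n)!

namespace expTail

variable (x : ℝ)

theorem summable (n : ℕ) : Summable fun j : ℕ => x ^ (j + n) / (j + n)! :=
  (summable_nat_add_iff n).2 (summable_pow_div_factorial x)

theorem pos {x : ℝ} (hx : 0 < x) (n : ℕ) : 0 < expTail x n :=
  (summable x n).tsum_pos (fun _ => by positivity) 0 (by positivity)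

theorem eq_add_succ (n : ℕ) : expTail x n = x ^ n / n ! + expTail x (n + 1) := by
  rw [expTail, (summable x n).tsum_eq_zero_add, expTail, zero_add]
  simp only [add_right_comm _ 1 n, add_assoc]

theorem zero : expTail x 0 = exp x := by
  simp [expTail, exp_eq_exp_ℝ, NormedSpace.exp_eq_tsum_div]

theorem one : expTail x 1 = exp x - 1 := by
  linarith [eq_add_succ x 0, zero x]

theorem two : expTail x 2 = exp x - 1 - x := by
  linarith [eq_add_succ x 1, one x]

theorem three_term_recurrence (n : ℕ) :
    (n + 1) * expTail x (n + 2) = (n + 1 + x) * expTail x (n + 1) - x * expTail x n := by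
  have h₀ := eq_add_succ x n
  have h₁ : expTail x (n + 1) = x ^ (n + 1) / (n + 1)! + expTail x (n + 2) := eq_add_succ x (n + 1)
  have hpow : (n + 1 : ℝ) * (x ^ (n + 1) / (n + 1)!) = x * (x ^ n / n !) := by
    rw [factorial_succ, cast_mul, pow_succ]
    field_simp
    push_cast
    ring
  linear_combination x * h₀ - (n + 1 : ℝ) * h₁ - hpow

end expTail

/-- The Charlier connection coefficients `κ_n = n·(Σ_{j≥n+1} λ^j/j!)/(Σ_{j≥n} λ^j/j!)`
satisfy `κ_1 = λ + 1 - λe^λ/(e^λ-1)` and `κ_n = n + λ - (n-1)λ/κ_{n-1}` for `n ≥ 2`. -/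
theorem stmt_7 (lam : ℝ) (hlam : 0 < lam)
    (S : ℕ → ℝ) (hS : ∀ n, S n = ∑' j : ℕ, lam ^ (j + n) / Nat.factorial (j + n))
    (κ : ℕ → ℝ) (hκ : ∀ n : ℕ, 1 ≤ n → κ n = n * S (n + 1) / S n) :
    κ 1 = lam + 1 - lam * exp lam / (exp lam - 1) ∧
      ∀ n : ℕ, 2 ≤ n → κ n = n + lam - (n - 1) * lam / κ (n - 1) := by
  obtain rfl : S = expTail lam := funext hS
  constructor
  · have hden : exp lam - 1 ≠ 0 := (expTail.one lam ▸ expTail.pos hlam 1).ne'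
    rw [hκ 1 le_rfl, expTail.two, expTail.one]
    field_simp
    ring
  · intro n hn
    obtain ⟨m, rfl⟩ := Nat.exists_eq_add_of_le' hn
    have h₁ := (expTail.pos hlam (m + 1)).ne'
    have h₂ := (expTail.pos hlam (m + 2)).ne'
    rw [show m + 2 - 1 = m + 1 by omega, hκ (m + 2) (by omega), hκ (m + 1) (by omega)]
    have hrec := expTail.three_term_recurrence lam (m + 1)
    simp only [add_assoc, Nat.reduceAdd] at hrec ⊢
    push_cast at hrec ⊢
    field_simp
    linear_combination ((m : ℝ) + 1) * hrec
end

section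
/- Let {b_n} be monic polynomials with b_{n+1}(x) = x b_n(x) - β̂_{n-1} b_{n-1}(x), b_{-1} = 0, b_0 = 1 (symmetric case, β_n = 0). Suppose λ_n ≠ 0 for n ≥ 2 satisfies λ_{n+1} = λ_n + β̂_{n-1} - (λ_n/λ_{n-1}) β̂_{n-3} for n ≥ 3, and set a_n(x) = b_n(x) + λ_n b_{n-2}(x) (with λ_0 = λ_1 = 0). Then a_{n+1}(x) = x a_n(x) - α̂_{n-1} a_{n-1}(x) with α̂_{n-1} = (λ_n/λ_{n-1}) β̂_{n-3} for n large enough that λ_{n-1} ≠ 0 (and α̂_{n-1} = λ_n + β̂_{n-1} - λ_{n+1} in general). -/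
open Polynomial

/-- Symmetric case: `a_n = b_n + λ_n b_{n-2}` satisfies the symmetric three-term recurrence
with `α̂_{n-1} = λ_n + β̂_{n-1} - λ_{n+1}`, which for `n ≥ 3` equals `(λ_n/λ_{n-1}) β̂_{n-3}`. -/
theorem stmt_10 (βh lam : ℕ → ℝ) (b a : ℕ → Polynomial ℝ)
    (hb0 : b 0 = 1) (hb1 : b 1 = X)
    (hbrec : ∀ n, 1 ≤ n → b (n + 1) = X * b n - C (βh (n - 1)) * b (n - 1))
    (hlam0 : lam 0 = 0) (hlam1 : lam 1 = 0)
    (hlamne : ∀ n, 2 ≤ n → lam n ≠ 0)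
    (hlamrec : ∀ n, 3 ≤ n →
      lam (n + 1) = lam n + βh (n - 1) - lam n / lam (n - 1) * βh (n - 3))
    (ha0 : a 0 = b 0) (ha1 : a 1 = b 1)
    (ha : ∀ n, 2 ≤ n → a n = b n + C (lam n) * b (n - 2)) :
    (∀ n, 1 ≤ n →
      a (n + 1) = X * a n - C (lam n + βh (n - 1) - lam (n + 1)) * a (n - 1)) ∧
    (∀ n, 3 ≤ n →
      lam n + βh (n - 1) - lam (n + 1) = lam n / lam (n - 1) * βh (n - 3)) := by
  have key : ∀ n, 3 ≤ n →
      lam n + βh (n - 1) - lam (n + 1) = lam n / lam (n - 1) * βh (n - 3) := by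
    intro n hn
    have := hlamrec n hn
    linarith
  refine ⟨?_, key⟩
  intro n hn
  match n, hn with
  | 1, _ =>
    rw [ha 2 (by norm_num), hbrec 1 (by norm_num)]
    simp only [ha0, ha1, hb0, hb1, hlam1, map_add, map_sub, map_zero]
    ring
  | 2, _ =>
    rw [ha 3 (by norm_num), ha 2 (by norm_num), hbrec 2 (by norm_num)]
    simp only [ha1, hb0, hb1, map_add, map_sub]
    ring
  | (m+3), _ =>
    have hα : (lam (m+3) + βh (m+2) - lam (m+4)) * lam (m+2) = lam (m+3) * βh m := by
      have h := key (m+3) (by omega)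
      simp only [Nat.add_sub_cancel, show m+3-1 = m+2 by omega, show m+3-3 = m by omega,
        show m+3+1 = m+4 by omega] at h
      field_simp [hlamne (m+2) (by omega)] at h
      linarith
    have eqα : ((C (lam (m+3)) + C (βh (m+2)) - C (lam (m+4)) : ℝ[X])) * C (lam (m+2))
        = C (lam (m+3)) * C (βh m) := by
      rw [← map_add, ← map_sub, ← C_mul, ← C_mul, hα]
    have eq1 := hbrec (m+1) (by omega)
    simp only [Nat.add_sub_cancel] at eq1
    have h4 := ha (m+4) (by omega)
    have h3 := ha (m+3) (by omega)
    have h2 := ha (m+2) (by omega)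
    have hb4 := hbrec (m+3) (by omega)
    simp only [Nat.add_sub_cancel, show m+4-2 = m+2 by omega, show m+3-2 = m+1 by omega,
      show m+2-2 = m by omega, show m+3-1 = m+2 by omega, show m+3+1 = m+4 by omega,
      show m+1-1 = m by omega, show m+1+1 = m+2 from rfl, map_add, map_sub] at h4 h3 h2 hb4 eq1 ⊢
    rw [h4, h3, h2, hb4]
    linear_combination C (lam (m+3)) * eq1 + (b m) * eqα
end
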